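/- Let α, β > -1, n ∈ ℕ, and define the shifted Jacobi polynomial Q_n^{(α,β)}(t) := P_n^{(α,β)}(2t-1) and R_n^{(α,β)}(t) := ((-1)^n B(α+1,β+1)/B(α+n+1,β+1)) Q_n^{(α,β+1)}(t). Then for every polynomial h with deg(h) ≤ n, (1/B(α+1,β+1)) ∫_0^1 h(t) R_n^{(α,β)}(t) (1-t)^α t^β dt = h(0). -/

import Mathlib

open MeasureTheory Finset

/-- Generalized binomial coefficient `C(a, m) = a(a-1)⋯(a-m+1)/m!`. -/
noncomputable def gbinom (a : ℝ) (m : ℕ) : ℝ :=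
  (∏ i ∈ Finset.range m, (a - i)) / m.factorial

/-- Jacobi polynomial `P_n^{(α,β)}`. -/
noncomputable def jacobiP (n : ℕ) (α β : ℝ) (x : ℝ) : ℝ :=
  ∑ k ∈ Finset.range (n + 1),
    gbinom (n + α) (n - k) * gbinom (n + β) k * ((x - 1) / 2) ^ k * ((x + 1) / 2) ^ (n - k)

/-- The Beta function. -/
noncomputable def realBeta (x y : ℝ) : ℝ := Real.Gamma x * Real.Gamma y / Real.Gamma (x + y)

/-- Shifted Jacobi polynomial `Q_n^{(α,β)}(t) = P_n^{(α,β)}(2t-1)`. -/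
noncomputable def shiftedJacobiQ (n : ℕ) (α β : ℝ) (t : ℝ) : ℝ := jacobiP n α β (2 * t - 1)

/-- The polynomial `R_n^{(α,β)}`. -/
noncomputable def reprodR (n : ℕ) (α β : ℝ) (t : ℝ) : ℝ :=
  ((-1 : ℝ) ^ n * realBeta (α + 1) (β + 1) / realBeta (α + n + 1) (β + 1)) *
    shiftedJacobiQ n α (β + 1) t

/-!
Expanding `Q_n^{(α,γ)}` in powers of `t` and `1 - t` turns `∫₀¹ Q_n^{(α,γ)}(t) (1-t)^α t^β dt` into
a sum of Beta values which, written with `Γ`, is a multiple of the `n`-th forward difference at `0`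
of `j ↦ Γ(β+1+j) / Γ(γ+1+j)`. One forward difference of this ratio is `β - γ` times the same ratio
with `γ` raised by one, so the integral equals `C(β-γ, n) B(α+n+1, β+1)`. For `γ = β + 1` and
`β + m` in place of `β` the coefficient is `C(m-1, n)`, which vanishes for `1 ≤ m ≤ n` and is
`(-1)^n` for `m = 0`: only the constant term of `h` survives.
-/

open Real

lemma Real.Gamma_add_natCast_eq_mul_prod {x : ℝ} (hx : 0 < x) (j : ℕ) :
    Gamma (x + j) = Gamma x * ∏ i ∈ range j, (x + i) := by
  induction j with
  | zero => simp
  | succ j ih =>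
    rw [prod_range_succ, ← mul_assoc, ← ih, Nat.cast_succ, ← add_assoc,
      Gamma_add_one (by positivity), mul_comm]

lemma gbinom_eq_Gamma_div {a : ℝ} {j : ℕ} (h : 0 < a + 1 - j) :
    gbinom a j = Gamma (a + 1) / (Gamma (a + 1 - j) * j.factorial) := by
  have hprod : ∏ i ∈ range j, (a + 1 - j + i) = ∏ i ∈ range j, (a - i) := by
    rw [← prod_range_reflect]
    refine prod_congr rfl fun i hi => ?_
    rw [Nat.cast_sub (by simp at hi; omega), Nat.cast_sub (by simp at hi; omega)]
    push_cast; ring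
  have hΓ := Gamma_add_natCast_eq_mul_prod h j
  rw [sub_add_cancel, hprod] at hΓ
  rw [gbinom, hΓ, mul_div_mul_left _ _ (Gamma_pos_of_pos h).ne']

lemma gbinom_natCast_eq_zero_of_lt {m n : ℕ} (h : m < n) : gbinom m n = 0 := by
  rw [gbinom, prod_eq_zero (mem_range.2 h) (sub_self _), zero_div]

lemma gbinom_neg_one (n : ℕ) : gbinom (-1) n = (-1) ^ n := by
  have : ∏ i ∈ range n, (-1 - (i : ℝ)) = (-1) ^ n * n.factorial := by
    rw [← prod_range_add_one_eq_factorial, Nat.cast_prod, ← card_range n, ← prod_const,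
      card_range, ← prod_mul_distrib]
    exact prod_congr rfl fun i _ => by push_cast; ring
  rw [gbinom, this, mul_div_cancel_right₀ _ (by positivity)]

lemma fwdDiff_Gamma_div_Gamma {c d : ℝ} (hc : 0 < c) (hd : 0 < d) :
    fwdDiff 1 (fun j : ℕ => Gamma (c + j) / Gamma (d + j))
      = fun j : ℕ => (c - d) * (Gamma (c + j) / Gamma (d + 1 + j)) := by
  funext j
  have hcj : 0 < c + j := by positivity
  have hdj : 0 < d + j := by positivity
  have hΓd : Gamma (d + 1 + j) = (d + j) * Gamma (d + j) := by
    rw [add_right_comm, Gamma_add_one hdj.ne']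
  have := (Gamma_pos_of_pos hdj).ne'
  simp only [fwdDiff, Nat.cast_add, Nat.cast_one, ← add_assoc, Gamma_add_one hcj.ne']
  rw [add_right_comm d, hΓd]
  field_simp
  ring

lemma fwdDiff_iter_Gamma_div_Gamma {c d : ℝ} (hc : 0 < c) (hd : 0 < d) (n : ℕ) :
    (fwdDiff 1)^[n] (fun j : ℕ => Gamma (c + j) / Gamma (d + j))
      = fun j : ℕ => (∏ i ∈ range n, (c - d - i)) *
          (Gamma (c + j) / Gamma (d + n + j)) := by
  induction n with
  | zero => simp
  | succ n ih =>
    have hdn : 0 < d + n := by positivity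
    funext j
    have step := congrFun (fwdDiff_Gamma_div_Gamma hc hdn) j
    simp only [fwdDiff] at step
    rw [Function.iterate_succ_apply', ih, fwdDiff, ← mul_sub, step, prod_range_succ]
    push_cast
    ring_nf

lemma sum_alternating_choose_mul_Gamma_div_Gamma {c d : ℝ} (hc : 0 < c) (hd : 0 < d) (n : ℕ) :
    ∑ k ∈ range (n + 1), (-1) ^ (n - k) * n.choose k * (Gamma (c + k) / Gamma (d + k))
      = (∏ i ∈ range n, (c - d - i)) * (Gamma c / Gamma (d + n)) := by
  have h := fwdDiff_iter_eq_sum_shift (h := 1) (fun j : ℕ => Gamma (c + j) / Gamma (d + j)) n 0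
  rw [fwdDiff_iter_Gamma_div_Gamma hc hd] at h
  simpa [zsmul_eq_mul] using h.symm

lemma cpow_mul_one_sub_cpow_eqOn (p q : ℝ) :
    Set.EqOn (fun x : ℝ => (x : ℂ) ^ ((q + 1 : ℝ) - 1 : ℂ) * (1 - (x : ℂ)) ^ ((p + 1 : ℝ) - 1 : ℂ))
      (fun x : ℝ => (((1 - x) ^ p * x ^ q : ℝ) : ℂ)) (Set.uIcc 0 1) := by
  intro x hx
  rw [Set.uIcc_of_le zero_le_one] at hx
  have h1x : 0 ≤ 1 - x := by linarith [hx.2]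
  simp only [Complex.ofReal_mul, Complex.ofReal_cpow hx.1, Complex.ofReal_cpow h1x]
  push_cast
  ring_nf

lemma intervalIntegrable_one_sub_rpow_mul_rpow {p q : ℝ} (hp : -1 < p) (hq : -1 < q) :
    IntervalIntegrable (fun t : ℝ => (1 - t) ^ p * t ^ q) volume 0 1 := by
  have hC := Complex.betaIntegral_convergent (u := (q + 1 : ℝ)) (v := (p + 1 : ℝ))
    (by simp; linarith) (by simp; linarith)
  rw [intervalIntegrable_iff] at hC ⊢
  have hC' := (hC.congr_fun (fun x hx => cpow_mul_one_sub_cpow_eqOn p q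
    (Set.uIoc_subset_uIcc hx)) measurableSet_uIoc).re
  simpa [IntegrableOn] using hC'

lemma integral_one_sub_rpow_mul_rpow {p q : ℝ} (hp : -1 < p) (hq : -1 < q) :
    ∫ t in (0 : ℝ)..1, (1 - t) ^ p * t ^ q = realBeta (p + 1) (q + 1) := by
  have h := Complex.Gamma_mul_Gamma_eq_betaIntegral (s := (q + 1 : ℝ)) (t := (p + 1 : ℝ))
    (by simp; linarith) (by simp; linarith)
  rw [Complex.betaIntegral, intervalIntegral.integral_congr (cpow_mul_one_sub_cpow_eqOn p q),
    intervalIntegral.integral_ofReal, ← Complex.ofReal_add, Complex.Gamma_ofReal,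
    Complex.Gamma_ofReal, Complex.Gamma_ofReal] at h
  norm_cast at h
  rw [realBeta, eq_div_iff (Gamma_pos_of_pos (by linarith)).ne', mul_comm (Gamma _),
    add_comm (p + 1), h, mul_comm]

lemma Real.rpow_add_natCast_of_neg_one_lt {x y : ℝ} (hx : 0 ≤ x) (hy : -1 < y) (n : ℕ) :
    x ^ (y + n) = x ^ y * x ^ n := by
  rcases n.eq_zero_or_pos with rfl | hn
  · simp
  · have : (1 : ℝ) ≤ n := by exact_mod_cast hn
    exact rpow_add_natCast' hx (by linarith)

lemma shiftedJacobiQ_mul_weight_eqOn {α β : ℝ} (hα : -1 < α) (hβ : -1 < β) (γ : ℝ) (n : ℕ) :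
    Set.EqOn (fun t => shiftedJacobiQ n α γ t * (1 - t) ^ α * t ^ β)
      (fun t => ∑ j ∈ range (n + 1), gbinom (n + α) j * gbinom (n + γ) (n - j) * (-1) ^ (n - j) *
        ((1 - t) ^ (α + (n - j : ℕ)) * t ^ (β + j))) (Set.uIcc 0 1) := by
  intro t ht
  rw [Set.uIcc_of_le zero_le_one] at ht
  have h1t : 0 ≤ 1 - t := by linarith [ht.2]
  simp only [shiftedJacobiQ, jacobiP, sum_mul]
  rw [← sum_range_reflect]
  refine sum_congr rfl fun j hj => ?_
  have hjn : j ≤ n := Nat.lt_succ_iff.mp (mem_range.mp hj)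
  rw [show n + 1 - 1 - j = n - j by omega, Nat.sub_sub_self hjn,
    rpow_add_natCast_of_neg_one_lt h1t hα, rpow_add_natCast_of_neg_one_lt ht.1 hβ,
    show (2 * t - 1 - 1) / 2 = -(1 - t) by ring, show (2 * t - 1 + 1) / 2 = t by ring, neg_pow]
  ring

lemma gbinom_mul_gbinom_mul_realBeta {α β γ : ℝ} (hα : -1 < α) (hβ : -1 < β) (hγ : -1 < γ)
    (j k : ℕ) :
    gbinom (j + k + α) j * gbinom (j + k + γ) k * realBeta (α + k + 1) (β + j + 1)
      = Gamma (α + (j + k) + 1) * Gamma (γ + (j + k) + 1) /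
          (Gamma (α + β + (j + k) + 2) * (j + k).factorial) *
        ((j + k).choose j * (Gamma (β + 1 + j) / Gamma (γ + 1 + j))) := by
  have hj : (0 : ℝ) ≤ j := j.cast_nonneg
  have hk : (0 : ℝ) ≤ k := k.cast_nonneg
  have hαk : 0 < α + k + 1 := by linarith
  have hγj : 0 < γ + 1 + j := by linarith
  have hchoose : ((j + k).choose j : ℝ) * j.factorial * k.factorial = (j + k).factorial := by
    rw [Nat.choose_symm_add]
    exact_mod_cast Nat.add_choose_mul_factorial_mul_factorial j k
  rw [gbinom_eq_Gamma_div (by linarith), gbinom_eq_Gamma_div (by linarith), realBeta,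
    show (j : ℝ) + k + α + 1 - j = α + k + 1 by ring,
    show (j : ℝ) + k + γ + 1 - k = γ + 1 + j by ring,
    show α + k + 1 + (β + j + 1) = α + β + (j + k) + 2 by ring,
    show (j : ℝ) + k + α + 1 = α + (j + k) + 1 by ring,
    show (j : ℝ) + k + γ + 1 = γ + (j + k) + 1 by ring, show β + j + 1 = β + 1 + j by ring,
    ← hchoose]
  have := (Gamma_pos_of_pos hαk).ne'
  have := (Gamma_pos_of_pos hγj).ne'
  have : Gamma (α + β + (j + k) + 2) ≠ 0 := (Gamma_pos_of_pos (by linarith)).ne'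
  have : ((j + k).choose j : ℝ) ≠ 0 := by exact_mod_cast (Nat.choose_pos (by omega)).ne'
  field_simp

theorem integral_shiftedJacobiQ_mul_weight {α β γ : ℝ} (hα : -1 < α) (hβ : -1 < β)
    (hγ : -1 < γ) (n : ℕ) :
    ∫ t in (0 : ℝ)..1, shiftedJacobiQ n α γ t * (1 - t) ^ α * t ^ β
      = gbinom (β - γ) n * realBeta (α + n + 1) (β + 1) := by
  have hint (j : ℕ) : IntervalIntegrable
      (fun t : ℝ => (1 - t) ^ (α + (n - j : ℕ)) * t ^ (β + j)) volume 0 1 :=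
    intervalIntegrable_one_sub_rpow_mul_rpow
      (by linarith [(n - j : ℕ).cast_nonneg (α := ℝ)]) (by linarith [j.cast_nonneg (α := ℝ)])
  rw [intervalIntegral.integral_congr (shiftedJacobiQ_mul_weight_eqOn hα hβ γ n),
    intervalIntegral.integral_finsetSum fun j _ => (hint j).const_mul _]
  have hterm : ∀ j ∈ range (n + 1), (∫ t in (0 : ℝ)..1, gbinom (n + α) j * gbinom (n + γ) (n - j) *
      (-1) ^ (n - j) * ((1 - t) ^ (α + (n - j : ℕ)) * t ^ (β + j)))
      = Gamma (α + n + 1) * Gamma (γ + n + 1) / (Gamma (α + β + n + 2) * n.factorial) *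
        ((-1) ^ (n - j) * n.choose j * (Gamma (β + 1 + j) / Gamma (γ + 1 + j))) := by
    intro j hj
    obtain ⟨k, rfl⟩ := Nat.exists_eq_add_of_le (Nat.lt_succ_iff.mp (mem_range.mp hj))
    rw [intervalIntegral.integral_const_mul, integral_one_sub_rpow_mul_rpow
      (by linarith [(j + k - j : ℕ).cast_nonneg (α := ℝ)]) (by linarith [j.cast_nonneg (α := ℝ)])]
    have := gbinom_mul_gbinom_mul_realBeta hα hβ hγ j k
    simp only [Nat.add_sub_cancel_left, Nat.cast_add] at this ⊢
    linear_combination (-1) ^ k * this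
  rw [sum_congr rfl hterm, ← mul_sum,
    sum_alternating_choose_mul_Gamma_div_Gamma (by linarith) (by linarith), gbinom, realBeta,
    show β + 1 - (γ + 1) = β - γ by ring, show γ + 1 + n = γ + n + 1 by ring,
    show α + n + 1 + (β + 1) = α + β + n + 2 by ring]
  have := (Gamma_pos_of_pos (show 0 < γ + n + 1 by linarith [n.cast_nonneg (α := ℝ)])).ne'
  field_simp

lemma continuous_shiftedJacobiQ (n : ℕ) (α β : ℝ) : Continuous (shiftedJacobiQ n α β) := by
  unfold shiftedJacobiQ jacobiP
  fun_prop

lemma intervalIntegrable_shiftedJacobiQ_mul_weight {α β : ℝ} (hα : -1 < α) (hβ : -1 < β)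
    (n : ℕ) (γ : ℝ) :
    IntervalIntegrable (fun t => shiftedJacobiQ n α γ t * (1 - t) ^ α * t ^ β) volume 0 1 := by
  simpa only [mul_assoc] using (intervalIntegrable_one_sub_rpow_mul_rpow hα hβ).continuousOn_mul
    (continuous_shiftedJacobiQ n α γ).continuousOn

lemma integral_shiftedJacobiQ_add_one_mul_weight {α β : ℝ} (hα : -1 < α) (hβ : -1 < β) (n : ℕ) :
    ∫ t in (0 : ℝ)..1, shiftedJacobiQ n α (β + 1) t * (1 - t) ^ α * t ^ β
      = (-1) ^ n * realBeta (α + n + 1) (β + 1) := by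
  rw [integral_shiftedJacobiQ_mul_weight hα hβ (by linarith), show β - (β + 1) = -1 by ring,
    gbinom_neg_one]

lemma integral_shiftedJacobiQ_add_one_mul_weight_mul_pow_eq_zero {α β : ℝ} (hα : -1 < α)
    (hβ : -1 < β) {m n : ℕ} (hm : 1 ≤ m) (hmn : m ≤ n) :
    ∫ t in (0 : ℝ)..1, shiftedJacobiQ n α (β + 1) t * (1 - t) ^ α * t ^ (β + m) = 0 := by
  obtain ⟨k, rfl⟩ := Nat.exists_eq_add_of_le hm
  rw [integral_shiftedJacobiQ_mul_weight hα
    (by linarith [(1 + k : ℕ).cast_nonneg (α := ℝ)]) (by linarith),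
    show β + ((1 + k : ℕ) : ℝ) - (β + 1) = (k : ℕ) by push_cast; ring,
    gbinom_natCast_eq_zero_of_lt (by omega), zero_mul]

/-- Reproducing property of  on the unit interval. -/
theorem reprodR_reproduces (α β : ℝ) (hα : -1 < α) (hβ : -1 < β) (n : ℕ)
    (h : Polynomial ℝ) (hdeg : h.degree ≤ n) :
    (1 / realBeta (α + 1) (β + 1)) *
      ∫ t in (0 : ℝ)..1, h.eval t * reprodR n α β t * (1 - t) ^ α * t ^ β
      = h.eval 0 := by
  have hβm (m : ℕ) : -1 < β + m := by linarith [m.cast_nonneg (α := ℝ)]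
  have hexpand : Set.EqOn (fun t => h.eval t * reprodR n α β t * (1 - t) ^ α * t ^ β)
      (fun t => (-1) ^ n * realBeta (α + 1) (β + 1) / realBeta (α + n + 1) (β + 1) *
        ∑ m ∈ range (n + 1),
          h.coeff m * (shiftedJacobiQ n α (β + 1) t * (1 - t) ^ α * t ^ (β + m)))
      (Set.uIcc 0 1) := by
    intro t ht
    rw [Set.uIcc_of_le zero_le_one] at ht
    simp only [reprodR, Polynomial.eval_eq_sum_range' (Nat.lt_succ_of_le
      (Polynomial.natDegree_le_of_degree_le hdeg)), mul_sum, sum_mul,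
      rpow_add_natCast_of_neg_one_lt ht.1 hβ]
    exact sum_congr rfl fun m _ => by ring
  rw [intervalIntegral.integral_congr hexpand, intervalIntegral.integral_const_mul,
    intervalIntegral.integral_finsetSum fun m _ =>
      (intervalIntegrable_shiftedJacobiQ_mul_weight hα (hβm m) n _).const_mul _,
    sum_eq_single 0 (fun m hm hm0 => by
      rw [intervalIntegral.integral_const_mul,
        integral_shiftedJacobiQ_add_one_mul_weight_mul_pow_eq_zero hα hβ (by omega)
          (Nat.lt_succ_iff.mp (mem_range.mp hm)), mul_zero]) (by simp),
    intervalIntegral.integral_const_mul, Nat.cast_zero, add_zero,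
    integral_shiftedJacobiQ_add_one_mul_weight hα hβ, ← Polynomial.coeff_zero_eq_eval_zero]
  have hB : realBeta (α + 1) (β + 1) ≠ 0 :=
    (ProbabilityTheory.beta_pos (by linarith) (by linarith)).ne'
  have hBn : realBeta (α + n + 1) (β + 1) ≠ 0 :=
    (ProbabilityTheory.beta_pos (by linarith [n.cast_nonneg (α := ℝ)]) (by linarith)).ne'
  field_simp
  rw [← pow_mul, (even_two.mul_left n).neg_one_pow, one_mul]
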